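/- arXiv:2510.14284 — 6 statements merged into one kernel-verified Lean document; each statement's English description precedes it below -/
import Mathlib

section
/- Let n ≥ 1, let μ ∈ ℝⁿ have all entries strictly positive, and for each permutation η of {1,…,n} let f_{·,η} ∈ ℝⁿ have nonnegative entries with Σ_{l=1}^n f_{l,η} = 1. For a pair (η,m) with Σ_{l=1}^m f_{l,η} > 0 define h(η,m) = (Σ_{l=1}^m μ_{η(l)})/(Σ_{l=1}^m f_{l,η}), and let h* be the minimum of h over all such pairs. Assume h* < Σ_{l=1}^n μ_l, let η† be a permutation attaining the minimum, and let m* be the largest m such that Σ_{l=1}^m f_{l,η†} > 0 and h(η†,m) = h*. Then: (i) f_{m*,η†} > 0; (ii) μ_{η†(m*)}/f_{m*,η†} ≤ h*; and (iii) for every k ∈ {m*+1,…,n}, either Σ_{l=m*+1}^k f_{l,η†} = 0 or h* < (Σ_{l=m*+1}^k μ_{η†(l)})/(Σ_{l=m*+1}^k f_{l,η†}). -/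
open Finset

/-!
Write `A m`, `B m` for the prefix sums of `μ ∘ η†` and `f η†` up to `m`. Minimality of `h*` gives
`h* * B m ≤ A m` for every `m` (trivially when `B m = 0`), with equality at `m*`. Subtracting the
inequality at the predecessor of `m*` from the equality at `m*` gives `μ (η† m*) ≤ h* * f m*`,
which yields (i) and (ii) since `μ > 0`. If some tail ratio beyond `m*` were at most `h*`, adding
it to the equality at `m*` would give equality at a later index, contradicting maximality of `m*`.
-/

section PrefixRatio

variable {ι : Type*} [LinearOrder ι] [LocallyFiniteOrderBot ι] {a b : ι → ℝ} {h : ℝ}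

theorem forall_mul_sum_Iic_le_of_le_div (ha : ∀ l, 0 ≤ a l) (hb : ∀ l, 0 ≤ b l)
    (hmin : ∀ m, 0 < ∑ l ∈ Iic m, b l → h ≤ (∑ l ∈ Iic m, a l) / ∑ l ∈ Iic m, b l) (m : ι) :
    h * ∑ l ∈ Iic m, b l ≤ ∑ l ∈ Iic m, a l := by
  rcases (sum_nonneg fun l _ => hb l : 0 ≤ ∑ l ∈ Iic m, b l).eq_or_lt with hB | hB
  · rw [← hB, mul_zero]
    exact sum_nonneg fun l _ => ha l
  · exact (le_div_iff₀ hB).mp (hmin m hB)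

theorem mul_sum_Iio_le [PredOrder ι] (hmin : ∀ m, h * ∑ l ∈ Iic m, b l ≤ ∑ l ∈ Iic m, a l)
    (m : ι) : h * ∑ l ∈ Iio m, b l ≤ ∑ l ∈ Iio m, a l := by
  by_cases hm : IsMin m
  · simp [hm.finsetIio_eq]
  · rw [← Iic_pred_eq_Iio_of_not_isMin hm]
    exact hmin _

theorem sum_Iic_eq_sum_Iic_add_sum_Ioc [LocallyFiniteOrder ι] {M : Type*} [AddCommMonoid M]
    (g : ι → M) {m k : ι} (hmk : m ≤ k) :
    ∑ l ∈ Iic k, g l = ∑ l ∈ Iic m, g l + ∑ l ∈ Ioc m k, g l := by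
  classical
  rw [← Iic_union_Ioc_eq_Iic hmk, sum_union (Iic_disjoint_Ioc le_rfl)]

theorem le_mul_of_sum_Iic_eq_mul [PredOrder ι]
    (hmin : ∀ m, h * ∑ l ∈ Iic m, b l ≤ ∑ l ∈ Iic m, a l) {m : ι}
    (hm : ∑ l ∈ Iic m, a l = h * ∑ l ∈ Iic m, b l) : a m ≤ h * b m := by
  classical
  rw [← Iio_insert, sum_insert notMem_Iio_self, sum_insert notMem_Iio_self] at hm
  linarith [mul_sum_Iio_le hmin m]

theorem sum_Iic_eq_mul_of_sum_Ioc_le_mul [LocallyFiniteOrder ι]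
    (hmin : ∀ m, h * ∑ l ∈ Iic m, b l ≤ ∑ l ∈ Iic m, a l) {m k : ι} (hmk : m ≤ k)
    (hm : ∑ l ∈ Iic m, a l = h * ∑ l ∈ Iic m, b l)
    (hle : ∑ l ∈ Ioc m k, a l ≤ h * ∑ l ∈ Ioc m k, b l) :
    ∑ l ∈ Iic k, a l = h * ∑ l ∈ Iic k, b l := by
  refine le_antisymm ?_ (hmin k)
  rw [sum_Iic_eq_sum_Iic_add_sum_Ioc a hmk, sum_Iic_eq_sum_Iic_add_sum_Ioc b hmk]
  linarith

end PrefixRatio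

theorem optimal_index_tail_inequalities_general
    (n : ℕ) (μ : Fin n → ℝ) (hμ : ∀ l, 0 < μ l)
    (f : Equiv.Perm (Fin n) → Fin n → ℝ)
    (hf0 : ∀ η l, 0 ≤ f η l)
    (hstar : ℝ)
    (hleast : IsLeast {x : ℝ | ∃ (η : Equiv.Perm (Fin n)) (m : Fin n),
        0 < ∑ l ∈ Finset.univ.filter (· ≤ m), f η l ∧
        x = (∑ l ∈ Finset.univ.filter (· ≤ m), μ (η l))
              / (∑ l ∈ Finset.univ.filter (· ≤ m), f η l)} hstar)
    (ηd : Equiv.Perm (Fin n)) (mstar : Fin n)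
    (hpos : 0 < ∑ l ∈ Finset.univ.filter (· ≤ mstar), f ηd l)
    (hval : (∑ l ∈ Finset.univ.filter (· ≤ mstar), μ (ηd l))
              / (∑ l ∈ Finset.univ.filter (· ≤ mstar), f ηd l) = hstar)
    (hmax : ∀ m : Fin n,
        0 < ∑ l ∈ Finset.univ.filter (· ≤ m), f ηd l →
        (∑ l ∈ Finset.univ.filter (· ≤ m), μ (ηd l))
            / (∑ l ∈ Finset.univ.filter (· ≤ m), f ηd l) = hstar →
        m ≤ mstar) :
    0 < f ηd mstar ∧
    μ (ηd mstar) / f ηd mstar ≤ hstar ∧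
    (∀ k : Fin n, mstar < k →
      (∑ l ∈ Finset.univ.filter (fun l => mstar < l ∧ l ≤ k), f ηd l = 0) ∨
      hstar < (∑ l ∈ Finset.univ.filter (fun l => mstar < l ∧ l ≤ k), μ (ηd l))
                / (∑ l ∈ Finset.univ.filter (fun l => mstar < l ∧ l ≤ k), f ηd l)) := by
  simp only [filter_ge_eq_Iic, filter_lt_le_eq_Ioc] at hleast hpos hval hmax ⊢
  have hmin : ∀ m, hstar * ∑ l ∈ Iic m, f ηd l ≤ ∑ l ∈ Iic m, μ (ηd l) :=
    forall_mul_sum_Iic_le_of_le_div (fun l => (hμ _).le) (hf0 ηd)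
      fun m hm => hleast.2 ⟨ηd, m, hm, rfl⟩
  have heq : ∑ l ∈ Iic mstar, μ (ηd l) = hstar * ∑ l ∈ Iic mstar, f ηd l :=
    (div_eq_iff hpos.ne').mp hval
  have hle : μ (ηd mstar) ≤ hstar * f ηd mstar := le_mul_of_sum_Iic_eq_mul hmin heq
  have hf : 0 < f ηd mstar := by
    refine (hf0 ηd mstar).lt_of_ne fun hzero => ?_
    rw [← hzero, mul_zero] at hle
    exact (hμ _).not_ge hle
  refine ⟨hf, (div_le_iff₀ hf).mpr hle, fun k hk => ?_⟩
  refine (sum_nonneg fun l _ => hf0 ηd l).eq_or_lt.imp Eq.symm fun hT => ?_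
  rw [lt_div_iff₀ hT]
  by_contra! htail
  have hprefix := sum_Iic_eq_mul_of_sum_Ioc_le_mul hmin hk.le heq htail
  have hBk : 0 < ∑ l ∈ Iic k, f ηd l := by
    rw [sum_Iic_eq_sum_Iic_add_sum_Ioc _ hk.le]
    exact add_pos hpos hT
  exact (hmax k hBk ((div_eq_iff hBk.ne').mpr hprefix)).not_gt hk

/-- Lemma A.1 of the paper. If the minimum `h*` of the partial-sum rate
ratios `h(η,m) = (Σ_{l≤m} μ_{η(l)})/(Σ_{l≤m} f_{l,η})` is strictly less than the total
service rate, `η†` attains it and `m*` is the largest index where `η†` attains it, then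
`f_{m*,η†} > 0`, `μ_{η†(m*)}/f_{m*,η†} ≤ h*`, and beyond `m*` every tail ratio either has
zero denominator or is strictly larger than `h*`. -/
theorem optimal_index_tail_inequalities
    (n : ℕ) (hn : 1 ≤ n) (μ : Fin n → ℝ) (hμ : ∀ l, 0 < μ l)
    (f : Equiv.Perm (Fin n) → Fin n → ℝ)
    (hf0 : ∀ η l, 0 ≤ f η l)
    (hf1 : ∀ η, ∑ l, f η l = 1)
    (hstar : ℝ)
    (hleast : IsLeast {x : ℝ | ∃ (η : Equiv.Perm (Fin n)) (m : Fin n),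
        0 < ∑ l ∈ Finset.univ.filter (· ≤ m), f η l ∧
        x = (∑ l ∈ Finset.univ.filter (· ≤ m), μ (η l))
              / (∑ l ∈ Finset.univ.filter (· ≤ m), f η l)} hstar)
    (hlt : hstar < ∑ l, μ l)
    (ηd : Equiv.Perm (Fin n)) (mstar : Fin n)
    (hpos : 0 < ∑ l ∈ Finset.univ.filter (· ≤ mstar), f ηd l)
    (hval : (∑ l ∈ Finset.univ.filter (· ≤ mstar), μ (ηd l))
              / (∑ l ∈ Finset.univ.filter (· ≤ mstar), f ηd l) = hstar)
    (hmax : ∀ m : Fin n,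
        0 < ∑ l ∈ Finset.univ.filter (· ≤ m), f ηd l →
        (∑ l ∈ Finset.univ.filter (· ≤ m), μ (ηd l))
            / (∑ l ∈ Finset.univ.filter (· ≤ m), f ηd l) = hstar →
        m ≤ mstar) :
    0 < f ηd mstar ∧
    μ (ηd mstar) / f ηd mstar ≤ hstar ∧
    (∀ k : Fin n, mstar < k →
      (∑ l ∈ Finset.univ.filter (fun l => mstar < l ∧ l ≤ k), f ηd l = 0) ∨
      hstar < (∑ l ∈ Finset.univ.filter (fun l => mstar < l ∧ l ≤ k), μ (ηd l))
                / (∑ l ∈ Finset.univ.filter (fun l => mstar < l ∧ l ≤ k), f ηd l)) :=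
  optimal_index_tail_inequalities_general n μ hμ f hf0 hstar hleast ηd mstar hpos hval hmax
end

section
/- Let n ≥ 1, let μ ∈ ℝⁿ have all entries strictly positive, and for each permutation η of {1,…,n} let f_{·,η} ∈ ℝⁿ have nonnegative entries with Σ_{l=1}^n f_{l,η} = 1. Define h(η,m) = (Σ_{l=1}^m μ_{η(l)})/(Σ_{l=1}^m f_{l,η}) for pairs with Σ_{l=1}^m f_{l,η} > 0 and let h* be the minimum over all such pairs; assume h* < Σ_{l=1}^n μ_l, let η† attain the minimum and let m* be the largest m with Σ_{l=1}^m f_{l,η†} > 0 and h(η†,m) = h*. Suppose the real number Λ satisfies h* < Λ and Λ·Σ_{l=m*+1}^k f_{l,η†} < Σ_{l=m*+1}^k μ_{η†(l)} for every k ∈ {m*+1,…,n}. Then: (a) Λ·Σ_{l=1}^{m*} f_{l,η†} > Σ_{l=1}^{m*} μ_{η†(l)}; (b) Λ·f_{m*,η†} > μ_{η†(m*)}; (c) Λ·Σ_{l=m*+1}^n f_{l,η†} < Σ_{l=m*+1}^n μ_{η†(l)}; and (d) Λ·f_{m*+1,η†} < μ_{η†(m*+1)}. -/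
open Finset

/-- rate inequalities in the proof of Theorem 4.2. If the total arrival
rate `Λ` exceeds the threshold `h*` but the tail partial sums beyond the critical index `m*`
remain underloaded, then the top `m*` servers are overloaded in aggregate and at the
least-loaded among them (index `m*`), while the remaining servers are underloaded in
aggregate and at the most-loaded among them (index `m*+1`). -/
theorem overload_underload_inequalities
    (n : ℕ) (hn : 1 ≤ n) (μ : Fin n → ℝ) (hμ : ∀ l, 0 < μ l)
    (f : Equiv.Perm (Fin n) → Fin n → ℝ)
    (hf0 : ∀ η l, 0 ≤ f η l)
    (hf1 : ∀ η, ∑ l, f η l = 1)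
    (hstar : ℝ)
    (hleast : IsLeast {x : ℝ | ∃ (η : Equiv.Perm (Fin n)) (m : Fin n),
        0 < ∑ l ∈ Finset.univ.filter (· ≤ m), f η l ∧
        x = (∑ l ∈ Finset.univ.filter (· ≤ m), μ (η l))
              / (∑ l ∈ Finset.univ.filter (· ≤ m), f η l)} hstar)
    (hlt : hstar < ∑ l, μ l)
    (ηd : Equiv.Perm (Fin n)) (mstar : Fin n)
    (hpos : 0 < ∑ l ∈ Finset.univ.filter (· ≤ mstar), f ηd l)
    (hval : (∑ l ∈ Finset.univ.filter (· ≤ mstar), μ (ηd l))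
              / (∑ l ∈ Finset.univ.filter (· ≤ mstar), f ηd l) = hstar)
    (hmax : ∀ m : Fin n,
        0 < ∑ l ∈ Finset.univ.filter (· ≤ m), f ηd l →
        (∑ l ∈ Finset.univ.filter (· ≤ m), μ (ηd l))
            / (∑ l ∈ Finset.univ.filter (· ≤ m), f ηd l) = hstar →
        m ≤ mstar)
    (Λ : ℝ) (hΛ : hstar < Λ)
    (hΛtail : ∀ k : Fin n, mstar < k →
      Λ * ∑ l ∈ Finset.univ.filter (fun l => mstar < l ∧ l ≤ k), f ηd l
        < ∑ l ∈ Finset.univ.filter (fun l => mstar < l ∧ l ≤ k), μ (ηd l)) :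
    (Λ * ∑ l ∈ Finset.univ.filter (· ≤ mstar), f ηd l
        > ∑ l ∈ Finset.univ.filter (· ≤ mstar), μ (ηd l)) ∧
    (Λ * f ηd mstar > μ (ηd mstar)) ∧
    (Λ * ∑ l ∈ Finset.univ.filter (fun l => mstar < l), f ηd l
        < ∑ l ∈ Finset.univ.filter (fun l => mstar < l), μ (ηd l)) ∧
    (∀ k : Fin n, (k : ℕ) = (mstar : ℕ) + 1 → Λ * f ηd k < μ (ηd k)) := by
  classical
  set F := ∑ l ∈ Finset.univ.filter (· ≤ mstar), f ηd l with hF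
  set M := ∑ l ∈ Finset.univ.filter (· ≤ mstar), μ (ηd l) with hM
  have hMF : M = hstar * F := by
    rw [← hval, div_mul_cancel₀ _ (ne_of_gt hpos)]
  have hMpos : 0 < M := by
    apply Finset.sum_pos (fun l _ => hμ _)
    exact ⟨mstar, by simp⟩
  have hstarpos : 0 < hstar := by
    rcases lt_trichotomy hstar 0 with h | h | h
    · nlinarith
    · nlinarith
    · exact h
  -- part (a)
  have parta : Λ * F > M := by
    rw [hMF]
    exact mul_lt_mul_of_pos_right hΛ hpos
  -- part (b)
  have partb : Λ * f ηd mstar > μ (ηd mstar) := by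
    rcases Nat.eq_zero_or_pos (mstar : ℕ) with h0 | h0
    · have hset : Finset.univ.filter (· ≤ mstar) = {mstar} := by
        ext l
        simp [Fin.le_def, h0, Nat.le_zero, Fin.ext_iff]
      rw [hF, hset, Finset.sum_singleton] at parta
      rw [hM, hset, Finset.sum_singleton] at parta
      exact parta
    · set m' : Fin n := ⟨(mstar : ℕ) - 1, by omega⟩ with hm'
      have hnotmem : mstar ∉ Finset.univ.filter (· ≤ m') := by
        simp only [Finset.mem_filter, Finset.mem_univ, true_and, Fin.le_def, hm']
        omega
      have hins : Finset.univ.filter (· ≤ mstar)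
          = insert mstar (Finset.univ.filter (· ≤ m')) := by
        ext l
        simp only [Finset.mem_filter, Finset.mem_insert, Finset.mem_univ, true_and,
          Fin.le_def, Fin.ext_iff, hm']
        omega
      set F' := ∑ l ∈ Finset.univ.filter (· ≤ m'), f ηd l with hF'
      set M' := ∑ l ∈ Finset.univ.filter (· ≤ m'), μ (ηd l) with hM'
      have hFsplit : F = f ηd mstar + F' := by
        rw [hF, hins, Finset.sum_insert hnotmem]
      have hMsplit : M = μ (ηd mstar) + M' := by
        rw [hM, hins, Finset.sum_insert hnotmem]
      have hF'nonneg : 0 ≤ F' := Finset.sum_nonneg fun l _ => hf0 ηd l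
      have hkey : hstar * F' ≤ M' := by
        rcases eq_or_lt_of_le hF'nonneg with h | h
        · have hM'nonneg : 0 ≤ M' :=
            Finset.sum_nonneg fun l _ => le_of_lt (hμ _)
          nlinarith
        · have := hleast.2 ⟨ηd, m', h, rfl⟩
          rw [le_div_iff₀ h] at this
          exact this
      have hμle : μ (ηd mstar) ≤ hstar * f ηd mstar := by nlinarith
      have hfpos : 0 < f ηd mstar := by nlinarith [hμ (ηd mstar), hf0 ηd mstar]
      nlinarith [hμ (ηd mstar)]
  refine ⟨parta, partb, ?_, ?_⟩
  -- part (c)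
  · obtain ⟨klast, hklv⟩ : ∃ k : Fin n, (k : ℕ) = n - 1 := ⟨⟨n - 1, by omega⟩, rfl⟩
    have hne : (mstar : ℕ) ≠ n - 1 := by
      intro h
      have huniv : Finset.univ.filter (· ≤ mstar) = Finset.univ := by
        ext l
        simp only [Finset.mem_filter, Finset.mem_univ, true_and, iff_true, Fin.le_def]
        omega
      have hF1 : F = 1 := by rw [hF, huniv, hf1]
      have hMall : M = ∑ l, μ l := by
        rw [hM, huniv]
        exact Equiv.sum_comp ηd μ
      rw [hF1, mul_one] at hMF
      rw [hMall] at hMF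
      linarith
    have hlt' : mstar < klast := by
      rw [Fin.lt_def, hklv]
      have := mstar.isLt
      omega
    have hc := hΛtail klast hlt'
    have hset : Finset.univ.filter (fun l => mstar < l ∧ l ≤ klast)
        = Finset.univ.filter (fun l => mstar < l) := by
      ext l
      simp only [Finset.mem_filter, Finset.mem_univ, true_and, Fin.lt_def, Fin.le_def, hklv]
      have := l.isLt
      omega
    rwa [hset] at hc
  -- part (d)
  · intro k hk
    have hlt' : mstar < k := by rw [Fin.lt_def]; omega
    have hd := hΛtail k hlt'
    have hset : Finset.univ.filter (fun l => mstar < l ∧ l ≤ k) = {k} := by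
      ext l
      simp only [Finset.mem_filter, Finset.mem_univ, true_and, Fin.lt_def, Fin.le_def,
        Finset.mem_singleton, Fin.ext_iff]
      omega
    rwa [hset, Finset.sum_singleton, Finset.sum_singleton] at hd
end

section
/- Let n ≥ 2, let μ ∈ ℝⁿ have all entries strictly positive, and for each permutation η of {1,…,n} let f_{·,η} ∈ ℝⁿ have nonnegative entries with Σ_{l=1}^n f_{l,η} = 1. Assume the strict majorization condition Σ_{l=1}^m f_{l,η} < (Σ_{l=1}^m μ_{η(l)})/(Σ_{l=1}^n μ_l) for all m ∈ {1,…,n−1} and all η. Define δ* = min over η and l ∈ {1,…,n−1} of [(Σ_{r=1}^l μ_{η(r)})/(Σ_{r=1}^n μ_r) − Σ_{r=1}^l f_{r,η}] and ξ* = max over η and l ∈ {1,…,n−1} of [1 − Σ_{r=1}^l f_{r,η}]. Then δ* > 0 and ξ* > 0, and for any ε with 0 < ε < (δ*·Σ_r μ_r)/ξ*, any permutation η, setting Λ = Σ_{r=1}^n μ_r − ε and β₁ = Λ f_{1,η} − μ_{η(1)} + ε, β_l = Λ f_{l,η} − μ_{η(l)} for l ∈ {2,…,n}, one has Σ_{r=1}^l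 β_r ≤ −(δ*·Σ_r μ_r − ξ*·ε) < 0 for every l ∈ {1,…,n−1}, and Σ_{r=1}^n β_r = 0. -/
open Finset

/-!
Writing `S = Σ μ`, `F` and `M` for the prefix sums of `f_η` and of `μ ∘ η`, the partial sum of
`β` equals `-S (M / S - F) + ε (1 - F)`: the first term is at most `-δ* S`, the second at most
`ξ* ε`. Strict majorization makes every term of the minimum defining `δ*` positive and, since
`M ≤ S`, forces `F < 1`, whence `ξ* > 0`. The total sum vanishes because `f_η` sums to `1` and
`η` only permutes `μ`.
-/

section

variable {n : ℕ}

/-- The paper's `β_r`, for `Λ = Σ μ - ε`; slots are indexed from `0`. -/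
def drift (μ f : Fin n → ℝ) (η : Equiv.Perm (Fin n)) (ε : ℝ) (r : Fin n) : ℝ :=
  ((∑ l, μ l) - ε) * f r - μ (η r) + if (r : ℕ) = 0 then ε else 0

lemma sum_ite_val_eq_zero_of_zero_mem [NeZero n] {T : Finset (Fin n)} (h0 : 0 ∈ T) (ε : ℝ) :
    ∑ r ∈ T, (if (r : ℕ) = 0 then ε else 0) = ε := by
  simp only [Fin.val_eq_zero_iff, sum_ite_eq', h0, if_true]

lemma sum_drift_of_zero_mem [NeZero n] (μ f : Fin n → ℝ) (η : Equiv.Perm (Fin n)) (ε : ℝ)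
    {T : Finset (Fin n)} (h0 : 0 ∈ T) :
    ∑ r ∈ T, drift μ f η ε r = ((∑ l, μ l) - ε) * ∑ r ∈ T, f r - ∑ r ∈ T, μ (η r) + ε := by
  simp only [drift, sum_add_distrib, sum_sub_distrib, ← mul_sum,
    sum_ite_val_eq_zero_of_zero_mem h0]

lemma sum_drift_eq_zero [NeZero n] (μ : Fin n → ℝ) {f : Fin n → ℝ} (hf : ∑ r, f r = 1)
    (η : Equiv.Perm (Fin n)) (ε : ℝ) : ∑ r, drift μ f η ε r = 0 := by
  rw [sum_drift_of_zero_mem μ f η ε (mem_univ 0), hf, Equiv.sum_comp]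
  ring

lemma sub_mul_sub_add_le_neg {S ε δ ξ F M : ℝ} (hS : 0 < S) (hε : 0 ≤ ε)
    (hδ : δ ≤ M / S - F) (hξ : 1 - F ≤ ξ) : (S - ε) * F - M + ε ≤ -(δ * S - ξ * ε) := by
  have hM : (δ + F) * S ≤ M := (le_div_iff₀ hS).1 (le_sub_iff_add_le.1 hδ)
  nlinarith [mul_le_mul_of_nonneg_left hξ hε]

lemma lt_one_of_lt_sum_comp_div_sum {μ : Fin n → ℝ} (hμ : ∀ l, 0 ≤ μ l) (η : Equiv.Perm (Fin n))
    (T : Finset (Fin n)) {F : ℝ} (hF : F < (∑ l ∈ T, μ (η l)) / ∑ l, μ l) : F < 1 := by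
  have hT : ∑ l ∈ T, μ (η l) ≤ ∑ l, μ l :=
    (sum_le_univ_sum_of_nonneg fun l => hμ (η l)).trans_eq (Equiv.sum_comp η μ)
  exact hF.trans_le (div_le_one_of_le₀ hT (sum_nonneg fun l _ => hμ l))

end

/-- negative partial sums of the drift coefficients, Theorem 5.1. Under
the strict majorization condition, `δ* > 0`, `ξ* > 0`, and for every small enough `ε > 0`
and every permutation `η`, the drift coefficient vector `β` (with `β₁ = Λ f_{1,η} − μ_{η(1)} + ε`
and `β_l = Λ f_{l,η} − μ_{η(l)}` for `l ≥ 2`, where `Λ = Σ_r μ_r − ε`) has all proper partial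
sums at most `−(δ*·Σ_r μ_r − ξ*·ε) < 0` and total sum zero. -/
theorem beta_partial_sums_negative
    (n : ℕ) (hn : 2 ≤ n) (μ : Fin n → ℝ) (hμ : ∀ l, 0 < μ l)
    (f : Equiv.Perm (Fin n) → Fin n → ℝ)
    (hf1 : ∀ η, ∑ l, f η l = 1)
    (hmaj : ∀ (η : Equiv.Perm (Fin n)) (m : Fin n), (m : ℕ) < n - 1 →
      ∑ l ∈ Finset.univ.filter (· ≤ m), f η l
        < (∑ l ∈ Finset.univ.filter (· ≤ m), μ (η l)) / ∑ l, μ l)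
    (δstar ξstar : ℝ)
    (hδ : δstar =
      Finset.inf'
        ((Finset.univ : Finset (Equiv.Perm (Fin n) × Fin n)).filter
          (fun p => (p.2 : ℕ) < n - 1))
        ⟨(1, ⟨0, by omega⟩), by
          simp only [Finset.mem_filter, Finset.mem_univ, true_and]
          omega⟩
        (fun p => (∑ l ∈ Finset.univ.filter (· ≤ p.2), μ (p.1 l)) / (∑ l, μ l)
          - ∑ l ∈ Finset.univ.filter (· ≤ p.2), f p.1 l))
    (hξ : ξstar =
      Finset.sup'
        ((Finset.univ : Finset (Equiv.Perm (Fin n) × Fin n)).filter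
          (fun p => (p.2 : ℕ) < n - 1))
        ⟨(1, ⟨0, by omega⟩), by
          simp only [Finset.mem_filter, Finset.mem_univ, true_and]
          omega⟩
        (fun p => 1 - ∑ l ∈ Finset.univ.filter (· ≤ p.2), f p.1 l)) :
    0 < δstar ∧ 0 < ξstar ∧
    ∀ ε : ℝ, 0 < ε → ε < δstar * (∑ l, μ l) / ξstar →
    ∀ η : Equiv.Perm (Fin n),
      (∀ m : Fin n, (m : ℕ) < n - 1 →
        ∑ r ∈ Finset.univ.filter (· ≤ m),
            (((∑ l, μ l) - ε) * f η r - μ (η r) + if (r : ℕ) = 0 then ε else 0)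
          ≤ -(δstar * (∑ l, μ l) - ξstar * ε)) ∧
      (-(δstar * (∑ l, μ l) - ξstar * ε) < 0) ∧
      (∑ r, (((∑ l, μ l) - ε) * f η r - μ (η r) + if (r : ℕ) = 0 then ε else 0) = 0) := by
  have : NeZero n := ⟨by omega⟩
  have hS : 0 < ∑ l, μ l := sum_pos (fun l _ => hμ l) univ_nonempty
  have hmem : ∀ (η : Equiv.Perm (Fin n)) (m : Fin n), (m : ℕ) < n - 1 →
      (η, m) ∈ univ.filter (fun p : Equiv.Perm (Fin n) × Fin n => (p.2 : ℕ) < n - 1) :=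
    fun η m hm => mem_filter.2 ⟨mem_univ _, hm⟩
  have hδpos : 0 < δstar :=
    hδ ▸ (lt_inf'_iff _).2 fun p hp => sub_pos.2 (hmaj p.1 p.2 (mem_filter.1 hp).2)
  have hξpos : 0 < ξstar := by
    have h0 : ((0 : Fin n) : ℕ) < n - 1 := by simp only [Fin.val_zero]; omega
    exact hξ ▸ (lt_sup'_iff _).2 ⟨_, hmem 1 0 h0,
      sub_pos.2 (lt_one_of_lt_sum_comp_div_sum (fun l => (hμ l).le) 1 _ (hmaj 1 0 h0))⟩
  refine ⟨hδpos, hξpos, fun ε hε hεlt η => ?_⟩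
  have hgap : 0 < δstar * ∑ l, μ l - ξstar * ε := by
    rw [lt_div_iff₀ hξpos] at hεlt
    linarith
  refine ⟨fun m hm => ?_, neg_lt_zero.2 hgap, sum_drift_eq_zero μ (hf1 η) η ε⟩
  change ∑ r ∈ univ.filter (· ≤ m), drift μ (f η) η ε r ≤ _
  rw [sum_drift_of_zero_mem μ (f η) η ε (mem_filter.2 ⟨mem_univ _, Fin.zero_le m⟩)]
  exact sub_mul_sub_add_le_neg hS hε.le (hδ ▸ inf'_le _ (hmem η m hm))
    (hξ ▸ le_sup' (fun p : Equiv.Perm (Fin n) × Fin n =>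
      1 - ∑ l ∈ univ.filter (· ≤ p.2), f p.1 l) (hmem η m hm))
end

section
/- Let n ≥ 1, let γ ∈ ℝⁿ have all entries strictly positive, let q ∈ ℝⁿ have all entries nonnegative, and let η be a permutation of {1,…,n} such that x_l := q_{η(l)}/γ_{η(l)} satisfies x₁ ≥ x₂ ≥ … ≥ xₙ. Let ε > 0, c > 0, and let β ∈ ℝⁿ satisfy Σ_{r=1}^l β_r ≤ −c for all l ∈ {1,…,n−1} and Σ_{r=1}^n β_r = 0. Then −ε·x₁ + Σ_{l=1}^n β_l x_l ≤ −(ε/√(Σ_r γ_r))·‖O_∥‖₂ − (c/√(n·max_l γ_l))·‖O_⊥‖₂, where O_∥ = ((‖q‖₁/‖γ‖₁)·√γ_l)_{l=1}^n and O_⊥ = (q_l/√γ_l − (‖q‖₁/‖γ‖₁)·√γ_l)_{l=1}^n with ‖q‖₁ = Σ_l q_l, ‖γ‖₁ = Σ_l γ_l. -/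
/-!
With `x_l = q_{η l} / γ_{η l}` non-increasing, Abel summation against the partial sums of `β`
(at most `-c` before the last index, zero at it) gives `∑ β_l x_l ≤ -c (x₁ - xₙ)`. The mean
`‖q‖₁ / ‖γ‖₁` is a mediant of the ratios `q_l / γ_l`, so it lies in `[xₙ, x₁]`. Hence
`‖O_∥‖₂ = √‖γ‖₁ · ‖q‖₁ / ‖γ‖₁ ≤ √‖γ‖₁ · x₁`, and the coordinates `√γ_l (q_l / γ_l - ‖q‖₁ / ‖γ‖₁)`
of `O_⊥` are bounded by `√γ_max (x₁ - xₙ)`, so `‖O_⊥‖₂ ≤ √(n γ_max) (x₁ - xₙ)`.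
-/

open Finset

theorem Fin.sum_mul_le_of_antitone_of_sum_Iic_le {m : ℕ} {c : ℝ} {β x : Fin (m + 1) → ℝ}
    (hx : Antitone x) (hβ : ∀ l < Fin.last m, ∑ r ≤ l, β r ≤ -c) :
    ∑ l, β l * x l ≤ -c * (x 0 - x (Fin.last m)) + (∑ l, β l) * x (Fin.last m) := by
  induction m with
  | zero => simp
  | succ m ih =>
    have hprefix : ∑ l : Fin (m + 1), β l.castSucc ≤ -c := by
      have := hβ _ (Fin.castSucc_lt_last (Fin.last m))
      rwa [Fin.sum_Iic_castSucc, ← Fin.top_eq_last, Iic_top] at this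
    have hinit := ih (β := β ∘ Fin.castSucc) (hx.comp_monotone Fin.strictMono_castSucc.monotone)
      fun l hl => by
        simpa [Fin.sum_Iic_castSucc] using
          hβ _ ((Fin.castSucc_lt_castSucc_iff.2 hl).trans (Fin.castSucc_lt_last _))
    have hstep : (∑ l : Fin (m + 1), β l.castSucc + c) *
        (x (Fin.last m).castSucc - x (Fin.last (m + 1))) ≤ 0 :=
      mul_nonpos_of_nonpos_of_nonneg (by linarith)
        (by linarith [hx (Fin.le_last (Fin.last m).castSucc)])
    simp only [Function.comp, Fin.castSucc_zero] at hinit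
    rw [Fin.sum_univ_castSucc (fun l => β l * x l), Fin.sum_univ_castSucc β]
    linarith

section Mediant

variable {ι : Type*} {s : Finset ι} {a b : ι → ℝ} {t : ℝ}

theorem Finset.sum_div_sum_le (hs : s.Nonempty) (hb : ∀ i ∈ s, 0 < b i)
    (h : ∀ i ∈ s, a i / b i ≤ t) : (∑ i ∈ s, a i) / ∑ i ∈ s, b i ≤ t := by
  rw [div_le_iff₀ (sum_pos hb hs), mul_sum]
  exact sum_le_sum fun i hi => (div_le_iff₀ (hb i hi)).1 (h i hi)

theorem Finset.le_sum_div_sum (hs : s.Nonempty) (hb : ∀ i ∈ s, 0 < b i)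
    (h : ∀ i ∈ s, t ≤ a i / b i) : t ≤ (∑ i ∈ s, a i) / ∑ i ∈ s, b i := by
  rw [le_div_iff₀ (sum_pos hb hs), mul_sum]
  exact sum_le_sum fun i hi => (le_div_iff₀ (hb i hi)).1 (h i hi)

end Mediant

theorem Real.sqrt_sum_sq_mul_sqrt {ι : Type*} [Fintype ι] {γ : ι → ℝ} {m : ℝ}
    (hγ : ∀ i, 0 ≤ γ i) (hm : 0 ≤ m) :
    √(∑ i, (m * √(γ i)) ^ 2) = m * √(∑ i, γ i) := by
  simp_rw [mul_pow, Real.sq_sqrt (hγ _), ← mul_sum]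
  rw [Real.sqrt_mul (sq_nonneg m), Real.sqrt_sq hm]

theorem Real.sqrt_sum_sq_div_sqrt_sub_mul_sqrt_le {ι : Type*} [Fintype ι] {q γ : ι → ℝ}
    {m lo hi G : ℝ} (hγ : ∀ i, 0 < γ i) (hG : ∀ i, γ i ≤ G)
    (hq : ∀ i, q i / γ i ∈ Set.Icc lo hi) (hm : m ∈ Set.Icc lo hi) :
    √(∑ i, (q i / √(γ i) - m * √(γ i)) ^ 2) ≤ √(Fintype.card ι * G) * (hi - lo) := by
  have hterm : ∀ i, (q i / √(γ i) - m * √(γ i)) ^ 2 ≤ G * (hi - lo) ^ 2 := by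
    intro i
    have hscale : ∀ s : ℝ, s ≠ 0 → (q i / s - m * s) ^ 2 = s ^ 2 * (q i / s ^ 2 - m) ^ 2 := by
      intro s hs
      field_simp
    have hdev : (q i / γ i - m) ^ 2 ≤ (hi - lo) ^ 2 :=
      sq_le_sq' (by linarith [(hq i).1, hm.2]) (by linarith [(hq i).2, hm.1])
    rw [hscale _ (Real.sqrt_pos.2 (hγ i)).ne', Real.sq_sqrt (hγ i).le]
    exact mul_le_mul (hG i) hdev (sq_nonneg _) ((hγ i).le.trans (hG i))
  calc √(∑ i, (q i / √(γ i) - m * √(γ i)) ^ 2) ≤ √(∑ _i : ι, G * (hi - lo) ^ 2) :=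
        Real.sqrt_le_sqrt (sum_le_sum fun i _ => hterm i)
    _ = √(Fintype.card ι * G) * (hi - lo) := by
        rw [sum_const, card_univ, nsmul_eq_mul, ← mul_assoc, Real.sqrt_mul' _ (sq_nonneg _),
          Real.sqrt_sq (by linarith [hm.1, hm.2])]

theorem div_mul_le_mul_of_le_mul {c s p d : ℝ} (hc : 0 ≤ c) (hs : 0 < s) (h : p ≤ s * d) :
    c / s * p ≤ c * d :=
  calc c / s * p ≤ c / s * (s * d) := mul_le_mul_of_nonneg_left h (div_nonneg hc hs.le)
    _ = c * d := by field_simp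

/-- deterministic core of the state-space-collapse proof, Theorem 5.1.
With sorted scaled queue lengths `x_l = q_{η(l)}/γ_{η(l)}`, `ε, c > 0`, and drift
coefficients `β` whose proper partial sums are at most `−c` and whose total sum is zero,
`−ε x₁ + Σ_l β_l x_l ≤ −(ε/√‖γ‖₁)·‖O_∥‖₂ − (c/√(n·γ_max))·‖O_⊥‖₂`. -/
theorem ssc_core_drift_inequality
    (n : ℕ) (hn : 1 ≤ n) (γ q : Fin n → ℝ)
    (hγ : ∀ l, 0 < γ l) (hq : ∀ l, 0 ≤ q l)
    (η : Equiv.Perm (Fin n))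
    (hsort : ∀ i j : Fin n, i ≤ j → q (η j) / γ (η j) ≤ q (η i) / γ (η i))
    (ε c : ℝ) (hε : 0 < ε) (hc : 0 < c)
    (β : Fin n → ℝ)
    (hβ : ∀ l : Fin n, (l : ℕ) < n - 1 →
      ∑ r ∈ Finset.univ.filter (· ≤ l), β r ≤ -c)
    (hβsum : ∑ r, β r = 0) :
    -ε * (q (η ⟨0, by omega⟩) / γ (η ⟨0, by omega⟩)) + ∑ l, β l * (q (η l) / γ (η l))
      ≤ -(ε / Real.sqrt (∑ r, γ r)) *
          Real.sqrt (∑ l, ((∑ r, q r) / (∑ r, γ r) * Real.sqrt (γ l)) ^ 2)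
        - (c / Real.sqrt (n * Finset.univ.sup' ⟨⟨0, by omega⟩, Finset.mem_univ _⟩ γ)) *
          Real.sqrt (∑ l,
            (q l / Real.sqrt (γ l) - (∑ r, q r) / (∑ r, γ r) * Real.sqrt (γ l)) ^ 2) := by
  obtain ⟨m, rfl⟩ : ∃ m, n = m + 1 := ⟨n - 1, by omega⟩
  set x : Fin (m + 1) → ℝ := fun l => q (η l) / γ (η l)
  change -ε * x 0 + ∑ l, β l * x l ≤ _
  set G := univ.sup' univ_nonempty γ
  set μ := (∑ r, q r) / ∑ r, γ r
  have hx : Antitone x := hsort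
  have hratio : ∀ l, q l / γ l ∈ Set.Icc (x (Fin.last m)) (x 0) := fun l => by
    simpa [x] using And.intro (hx (Fin.le_last (η.symm l))) (hx (Fin.zero_le (η.symm l)))
  have hμ : μ ∈ Set.Icc (x (Fin.last m)) (x 0) :=
    ⟨le_sum_div_sum univ_nonempty (fun l _ => hγ l) fun l _ => (hratio l).1,
      sum_div_sum_le univ_nonempty (fun l _ => hγ l) fun l _ => (hratio l).2⟩
  have hdrift : ∑ l, β l * x l ≤ -c * (x 0 - x (Fin.last m)) := by
    have := Fin.sum_mul_le_of_antitone_of_sum_Iic_le hx fun l hl => by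
      simpa [filter_ge_eq_Iic] using hβ l (by simpa [Fin.lt_def] using hl)
    rwa [hβsum, zero_mul, add_zero] at this
  have hpar : ε / √(∑ r, γ r) * √(∑ l, (μ * √(γ l)) ^ 2) = ε * μ := by
    have hS : √(∑ r, γ r) ≠ 0 := (Real.sqrt_pos.2 (sum_pos (fun l _ => hγ l) univ_nonempty)).ne'
    rw [Real.sqrt_sum_sq_mul_sqrt (fun l => (hγ l).le)
      (div_nonneg (sum_nonneg fun l _ => hq l) (sum_nonneg fun l _ => (hγ l).le)),
      mul_comm μ, ← mul_assoc, div_mul_cancel₀ ε hS]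
  have hperp : c / √((↑(m + 1) : ℝ) * G) * √(∑ l, (q l / √(γ l) - μ * √(γ l)) ^ 2)
      ≤ c * (x 0 - x (Fin.last m)) := by
    refine div_mul_le_mul_of_le_mul hc.le
      (Real.sqrt_pos.2 (mul_pos (by positivity) ((hγ 0).trans_le (le_sup' γ (mem_univ 0))))) ?_
    simpa only [Fintype.card_fin] using Real.sqrt_sum_sq_div_sqrt_sub_mul_sqrt_le (G := G) hγ
      (fun l => le_sup' γ (mem_univ l)) hratio hμ
  linarith [mul_le_mul_of_nonneg_left hμ.2 hε.le]
end

section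
/- Let T ≥ 1 and let Q(0), Q(1), …, Q(T) and A(0),…,A(T−1), S(0),…,S(T−1), U(0),…,U(T−1) be nonnegative real numbers satisfying, for every j ∈ {0,…,T−1}: Q(j+1) = Q(j) + A(j) − S(j) + U(j), Q(j+1)·U(j) = 0, and U(j) ≤ S(j). Then Q(T)·Σ_{j=0}^{T−1} U(j) ≤ Σ_{i=1}^{T−1} A(i)·(Σ_{j=0}^{i−1} U(j)). -/
open Finset

/-- Equation (F.3) of the paper. For the single-queue dynamics
`Q(j+1) = Q(j) + A(j) − S(j) + U(j)` with `Q(j+1)·U(j) = 0` and `U(j) ≤ S(j)`, the product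
of the terminal queue length and the accumulated unused service over a cycle of `T` slots
satisfies `Q(T)·Σ_{j<T} U(j) ≤ Σ_{i=1}^{T−1} A(i)·Σ_{j<i} U(j)`. -/
theorem unused_service_telescoping_bound
    (T : ℕ) (hT : 1 ≤ T) (Q A S U : ℕ → ℝ)
    (hQ : ∀ j ≤ T, 0 ≤ Q j)
    (hA : ∀ j < T, 0 ≤ A j)
    (hS : ∀ j < T, 0 ≤ S j)
    (hU : ∀ j < T, 0 ≤ U j)
    (hdyn : ∀ j < T, Q (j + 1) = Q j + A j - S j + U j)
    (hQU : ∀ j < T, Q (j + 1) * U j = 0)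
    (hUS : ∀ j < T, U j ≤ S j) :
    Q T * ∑ j ∈ Finset.range T, U j
      ≤ ∑ i ∈ Finset.Ico 1 T, A i * ∑ j ∈ Finset.range i, U j := by
  suffices h : ∀ t, 1 ≤ t → t ≤ T →
      Q t * ∑ j ∈ Finset.range t, U j
        ≤ ∑ i ∈ Finset.Ico 1 t, A i * ∑ j ∈ Finset.range i, U j by
    exact h T hT le_rfl
  intro t h1 hle
  induction t, h1 using Nat.le_induction with
  | base =>
    simp [Finset.range_one, hQU 0 (by omega)]
  | succ t ht ih =>
    have htT : t < T := by omega
    have hsum : (0:ℝ) ≤ ∑ j ∈ Finset.range t, U j :=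
      Finset.sum_nonneg fun j hj => hU j (by
        have := Finset.mem_range.mp hj; omega)
    have key : Q (t + 1) ≤ Q t + A t := by
      have := hdyn t htT
      have := hUS t htT
      linarith
    calc Q (t + 1) * ∑ j ∈ Finset.range (t + 1), U j
        = Q (t + 1) * ∑ j ∈ Finset.range t, U j + Q (t + 1) * U t := by
          rw [Finset.sum_range_succ]; ring
      _ = Q (t + 1) * ∑ j ∈ Finset.range t, U j := by
          rw [hQU t htT]; ring
      _ ≤ (Q t + A t) * ∑ j ∈ Finset.range t, U j :=
          mul_le_mul_of_nonneg_right key hsum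
      _ = Q t * ∑ j ∈ Finset.range t, U j + A t * ∑ j ∈ Finset.range t, U j := by ring
      _ ≤ (∑ i ∈ Finset.Ico 1 t, A i * ∑ j ∈ Finset.range i, U j)
            + A t * ∑ j ∈ Finset.range t, U j := by
          have := ih (by omega)
          linarith
      _ = ∑ i ∈ Finset.Ico 1 (t + 1), A i * ∑ j ∈ Finset.range i, U j := by
          rw [Finset.sum_Ico_succ_top (by omega)]
end

section
/- Let T ≥ 1, let α ≥ 0 and A_max ≥ 0, and let Q(0),…,Q(T) and A(0),…,A(T−1), S(0),…,S(T−1), U(0),…,U(T−1) be nonnegative real numbers satisfying, for every j ∈ {0,…,T−1}: Q(j+1) = Q(j) + A(j) − S(j) + U(j), Q(j+1)·U(j) = 0, U(j) ≤ S(j), and A(j) ≤ A_max. Then (Σ_{j=0}^{T−1} U(j))·e^{α·Q(T)} ≤ e^{α·A_max·(T−1)}·Σ_{j=0}^{T−1} U(j). -/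
open Finset

/-- exponential unused-service bound, from the proof of Theorem 5.4.
For the single-queue dynamics `Q(j+1) = Q(j) + A(j) − S(j) + U(j)` with `Q(j+1)·U(j) = 0`,
`U(j) ≤ S(j)`, and arrivals bounded by `A_max`, one has
`(Σ_{j<T} U(j))·e^{α·Q(T)} ≤ e^{α·A_max·(T−1)}·Σ_{j<T} U(j)` for every `α ≥ 0`. -/
theorem unused_service_exponential_bound
    (T : ℕ) (hT : 1 ≤ T) (α Amax : ℝ) (hα : 0 ≤ α) (hAmax : 0 ≤ Amax)
    (Q A S U : ℕ → ℝ)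
    (hQ : ∀ j ≤ T, 0 ≤ Q j)
    (hA : ∀ j < T, 0 ≤ A j)
    (hS : ∀ j < T, 0 ≤ S j)
    (hU : ∀ j < T, 0 ≤ U j)
    (hdyn : ∀ j < T, Q (j + 1) = Q j + A j - S j + U j)
    (hQU : ∀ j < T, Q (j + 1) * U j = 0)
    (hUS : ∀ j < T, U j ≤ S j)
    (hAbound : ∀ j < T, A j ≤ Amax) :
    (∑ j ∈ Finset.range T, U j) * Real.exp (α * Q T)
      ≤ Real.exp (α * Amax * ((T : ℝ) - 1)) * ∑ j ∈ Finset.range T, U j := by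
  have key : ∀ j < T, U j * Real.exp (α * Q T)
      ≤ Real.exp (α * Amax * ((T : ℝ) - 1)) * U j := by
    intro j hj
    rcases eq_or_lt_of_le (hU j hj) with h0 | hpos
    · rw [← h0]; simp
    · have hQ1 : Q (j + 1) = 0 := by
        rcases mul_eq_zero.mp (hQU j hj) with h | h
        · exact h
        · exact absurd h (ne_of_gt hpos)
      -- Q k ≤ Amax * (k - (j+1)) for j+1 ≤ k ≤ T
      have step : ∀ k, j + 1 ≤ k → k ≤ T → Q k ≤ Amax * ((k : ℝ) - (j + 1)) := by
        intro k
        induction k with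
        | zero => intro h; omega
        | succ n ih =>
          intro h1 h2
          rcases Nat.lt_or_ge (j + 1) (n + 1) with hlt | hge
          · have hn1 : j + 1 ≤ n := by omega
            have hnT : n < T := by omega
            have hQn : Q n ≤ Amax * ((n : ℝ) - (j + 1)) := ih hn1 (le_of_lt hnT)
            have hd := hdyn n hnT
            have hAn := hAbound n hnT
            have hUSn := hUS n hnT
            push_cast
            nlinarith [hQn]
          · have : j + 1 = n + 1 := by omega
            rw [← this, hQ1]
            push_cast
            nlinarith
      have hQT : Q T ≤ Amax * ((T : ℝ) - 1) := by
        have h1 := step T (by omega) le_rfl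
        have hj' : (0 : ℝ) ≤ (j : ℝ) := Nat.cast_nonneg j
        nlinarith
      have hexp : Real.exp (α * Q T) ≤ Real.exp (α * Amax * ((T : ℝ) - 1)) := by
        apply Real.exp_le_exp.mpr
        calc α * Q T ≤ α * (Amax * ((T : ℝ) - 1)) :=
              mul_le_mul_of_nonneg_left hQT hα
          _ = α * Amax * ((T : ℝ) - 1) := by ring
      calc U j * Real.exp (α * Q T) ≤ U j * Real.exp (α * Amax * ((T : ℝ) - 1)) :=
            mul_le_mul_of_nonneg_left hexp (le_of_lt hpos)
        _ = Real.exp (α * Amax * ((T : ℝ) - 1)) * U j := mul_comm _ _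
  calc (∑ j ∈ Finset.range T, U j) * Real.exp (α * Q T)
      = ∑ j ∈ Finset.range T, U j * Real.exp (α * Q T) := by rw [Finset.sum_mul]
    _ ≤ ∑ j ∈ Finset.range T, Real.exp (α * Amax * ((T : ℝ) - 1)) * U j := by
        apply Finset.sum_le_sum
        intro j hj
        exact key j (Finset.mem_range.mp hj)
    _ = Real.exp (α * Amax * ((T : ℝ) - 1)) * ∑ j ∈ Finset.range T, U j := by
        rw [Finset.mul_sum]
end
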